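/- arXiv:2506.03492 — 3 statements merged into one kernel-verified Lean document; each statement's English description precedes it below -/
import Mathlib

section
/- Subdividing a directed edge u → v of a finite directed graph by inserting two fresh nodes (replacing u → v with u → x → y → v, where x and y are fresh nodes with no other incident edges) preserves the winner of Generalized Geography from any start node s that is an original node: the first player wins on the original graph iff the first player wins on the subdivided graph. -/
/-- Generalized Geography.  A position consists of the set `M` of marked nodes and the
node `v` currently holding the token (always `v ∈ M` in actual play).  `MoverWins E M v`
says that the player to move has a winning strategy: there is a legal move `v → w`
(along an edge of `E`, to an unmarked node `w`, which becomes marked) such that every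
legal answer of the opponent leads to a position where the original player, again to
move, wins.  In particular if the opponent is then stuck, the condition holds vacuously
and the mover wins.  A player unable to move loses, so `¬ MoverWins E M v` with no legal
move available means the mover loses immediately. -/
inductive MoverWins {V : Type} [DecidableEq V] (E : V → V → Prop) :
    Finset V → V → Prop where
  | intro (M : Finset V) (v w : V) (hE : E v w) (hw : w ∉ M)
      (h : ∀ u, E w u → u ∉ insert w M → MoverWins E (insert u (insert w M)) u) :
      MoverWins E M v

/-- `Legal E M v L` : starting from marked set `M` with the token on `v`, the successive
moves recorded in the list `L` are all legal geography moves. -/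
def Legal {V : Type} [DecidableEq V] (E : V → V → Prop) : Finset V → V → List V → Prop
  | _, _, [] => True
  | M, v, w :: L => E v w ∧ w ∉ M ∧ Legal E (insert w M) w L

/-- Subdivision of the single edge `u → v` by two fresh nodes `x = Sum.inr false` and
`y = Sum.inr true`: the edge `u → v` is replaced by `u → x → y → v`; `x` and `y` have no
other incident edges; all other edges are kept. -/
def SubdivTwo {V : Type} (E : V → V → Prop) (u v : V) : V ⊕ Bool → V ⊕ Bool → Prop
  | Sum.inl a, Sum.inl b => E a b ∧ ¬(a = u ∧ b = v)
  | Sum.inl a, Sum.inr x => a = u ∧ x = false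
  | Sum.inr x, Sum.inr y => x = false ∧ y = true
  | Sum.inr y, Sum.inl b => y = true ∧ b = v

namespace SubdivAux

variable {V : Type} [DecidableEq V]

/-- Lift of a marked set of the original graph to the subdivided graph; the boolean
records whether the two fresh nodes are marked. -/
def lift (M : Finset V) : Bool → Finset (V ⊕ Bool)
  | false => M.image Sum.inl
  | true => insert (Sum.inr true) (insert (Sum.inr false) (M.image Sum.inl))

@[simp] lemma mem_lift_inl (M : Finset V) (b : Bool) (a : V) :
    Sum.inl a ∈ lift M b ↔ a ∈ M := by cases b <;> simp [lift]

@[simp] lemma mem_lift_inr (M : Finset V) (b c : Bool) :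
    (Sum.inr c : V ⊕ Bool) ∈ lift M b ↔ b = true := by
  cases b <;> cases c <;> simp [lift]

lemma lift_insert (M : Finset V) (b : Bool) (a : V) :
    insert (Sum.inl a) (lift M b) = lift (insert a M) b := by
  cases b <;> (ext t; rcases t with t | t <;> simp [lift] <;> tauto)

lemma fwd (E : V → V → Prop) (u v : V) (huv : E u v) :
    ∀ {M w}, MoverWins E M w → ∀ b, (b = true → v ∈ M) →
      MoverWins (SubdivTwo E u v) (lift M b) (Sum.inl w) := by
  intro M w h
  induction h with
  | intro M w0 w hE hw h ih =>
    intro b hb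
    by_cases hcase : w0 = u ∧ w = v
    · -- the winning move is the subdivided edge: play u → x
      obtain ⟨rfl, rfl⟩ := hcase
      have hbf : b = false := by
        cases b
        · rfl
        · exact absurd (hb rfl) hw
      subst hbf
      refine MoverWins.intro _ _ (Sum.inr false) ⟨rfl, rfl⟩ (by simp) ?_
      intro t ht hmem
      rcases t with a | c
      · exact absurd ht.1 (by simp)
      · obtain ⟨-, rfl⟩ := ht
        -- now at y; play y → v (here u, v have been renamed to w0, w)
        refine MoverWins.intro _ _ (Sum.inl w) ⟨rfl, rfl⟩ (by simp [lift, hw]) ?_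
        intro t2 ht2 hmem2
        rcases t2 with a2 | c2
        · obtain ⟨hE2, hne2⟩ := ht2
          have hw2 : a2 ∉ insert w M := by
            simp only [Finset.mem_insert, mem_lift_inl, Sum.inl.injEq] at hmem2 ⊢
            tauto
          have := ih a2 hE2 hw2 true (fun _ => by simp)
          have hset : insert (Sum.inl a2) (insert (Sum.inl w) (insert (Sum.inr true)
              (insert (Sum.inr false) (lift M false)))) =
              lift (insert a2 (insert w M)) true := by
            ext t; rcases t with t | t <;> simp [lift] <;> tauto
          rwa [hset]
        · obtain ⟨rfl, rfl⟩ := ht2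
          exact absurd (by simp) hmem2
    · -- an ordinary move w0 → w survives in the subdivided graph
      refine MoverWins.intro _ _ (Sum.inl w) ⟨hE, hcase⟩ (by simp [hw]) ?_
      intro t ht hmem
      rcases t with w'' | c
      · obtain ⟨hE2, hne2⟩ := ht
        have hw2 : w'' ∉ insert w M := by
          simp only [Finset.mem_insert, mem_lift_inl, Sum.inl.injEq] at hmem ⊢
          tauto
        have := ih w'' hE2 hw2 b (fun hb' => by simp [hb hb'])
        rwa [lift_insert, lift_insert]
      · obtain ⟨rfl, rfl⟩ := ht
        -- opponent entered x; respond x → y, then the forced y → v leads to a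
        -- position reached in the original game by the answer w → v.
        have hbf : b = false := by
          cases b
          · rfl
          · exact absurd (by simp : (Sum.inr false : V ⊕ Bool) ∈
              insert (Sum.inl w) (lift M true)) (by simpa using hmem)
        subst hbf
        refine MoverWins.intro _ _ (Sum.inr true) ⟨rfl, rfl⟩ (by simp [lift]) ?_
        intro t2 ht2 hmem2
        rcases t2 with a2 | c2
        · obtain ⟨-, rfl⟩ := ht2
          -- here `u`, `v` have been renamed to `w`, `a2`
          have hv : a2 ∉ insert w M := by
            simp only [Finset.mem_insert, mem_lift_inl, Sum.inl.injEq,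
              Finset.mem_insert] at hmem2 ⊢
            tauto
          have := ih a2 huv hv true (fun _ => by simp)
          have hset : insert (Sum.inl a2) (insert (Sum.inr true) (insert (Sum.inr false)
              (insert (Sum.inl w) (lift M false)))) =
              lift (insert a2 (insert w M)) true := by
            ext t; rcases t with t | t <;> simp [lift] <;> tauto
          rwa [hset]
        · exact absurd ht2.1 (by simp)

set_option maxHeartbeats 1000000 in
lemma rev (E : V → V → Prop) (u v : V) (huv : E u v) :
    ∀ {M' t}, MoverWins (SubdivTwo E u v) M' t →
      (∀ (M : Finset V) (w : V) (b : Bool), t = Sum.inl w → M' = lift M b →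
        (b = true → v ∈ M) → MoverWins E M w) ∧
      (∀ M : Finset V, t = Sum.inr false →
        M' = insert (Sum.inr false) (M.image Sum.inl) →
        v ∉ M → MoverWins E (insert v M) v) ∧
      (∀ M : Finset V, t = Sum.inr true →
        M' = insert (Sum.inr true) (insert (Sum.inr false) (M.image Sum.inl)) →
        v ∉ M ∧ ∀ w, E v w → w ∉ insert v M →
          MoverWins E (insert w (insert v M)) w) := by
  intro M' t h
  induction h with
  | intro M0 t0 t1 hE hw h ih =>
    refine ⟨?_, ?_, ?_⟩
    · -- token on an original node
      rintro M w b rfl rfl hb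
      rcases t1 with w' | c
      · obtain ⟨hE1, hne1⟩ := hE
        have hw' : w' ∉ M := by simpa using hw
        refine MoverWins.intro _ _ w' hE1 hw' ?_
        intro w'' hE2 hw2
        by_cases hc : w' = u ∧ w'' = v
        · -- answer along the subdivided edge: in E' the opponent answers w' → x
          obtain ⟨rfl, rfl⟩ := hc
          have hbf : b = false := by
            cases b
            · rfl
            · exact absurd (Finset.mem_insert_of_mem (hb rfl)) hw2
          subst hbf
          have hmem : (Sum.inr false : V ⊕ Bool) ∉
              insert (Sum.inl w') (lift M false) := by simp [lift]
          have := (ih (Sum.inr false) ⟨rfl, rfl⟩ hmem).2.1 (insert w' M) rfl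
            (by rw [lift_insert]; rfl) (by simpa using hw2)
          exact this
        · have hmem : (Sum.inl w'' : V ⊕ Bool) ∉
              insert (Sum.inl w') (lift M b) := by
            simp only [Finset.mem_insert, mem_lift_inl, Sum.inl.injEq] at hw2 ⊢
            tauto
          exact (ih (Sum.inl w'') ⟨hE2, hc⟩ hmem).1 (insert w'' (insert w' M)) w'' b rfl
            (by rw [lift_insert, lift_insert]) (fun hb' => by simp [hb hb'])
      · -- the winning move enters x: in the original game play t0 = u → v
        obtain ⟨rfl, rfl⟩ := hE
        have hbf : b = false := by
          cases b
          · rfl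
          · exact absurd (by simp) hw
        subst hbf
        have hmem : (Sum.inr true : V ⊕ Bool) ∉
            insert (Sum.inr false) (lift M false) := by simp [lift]
        have H3 := (ih (Sum.inr true) ⟨rfl, rfl⟩ hmem).2.2 M rfl rfl
        exact MoverWins.intro _ _ v huv H3.1 H3.2
    · -- token on x : the only move is x → y, answered only by y → v
      rintro M rfl rfl hv
      rcases t1 with a | c
      · exact absurd hE.1 (by simp)
      · obtain ⟨-, rfl⟩ := hE
        have hmem : (Sum.inl v : V ⊕ Bool) ∉ insert (Sum.inr true)
            (insert (Sum.inr false) (M.image Sum.inl)) := by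
          simp [hv]
        have := (ih (Sum.inl v) ⟨rfl, rfl⟩ hmem).1 (insert v M) v true rfl
          (by ext t; rcases t with t | t <;> simp [lift] <;> tauto) (fun _ => by simp)
        exact this
    · -- token on y : the only move is y → v
      rintro M rfl rfl
      rcases t1 with a | c
      · obtain ⟨-, rfl⟩ := hE
        -- here `v` has been renamed to `a`
        have hv : a ∉ M := by simpa using hw
        refine ⟨hv, ?_⟩
        intro w'' hE2 hw2
        have hne : ¬(a = u ∧ w'' = a) := fun hc =>
          hw2 (hc.2 ▸ Finset.mem_insert_self _ _)
        have hmem : (Sum.inl w'' : V ⊕ Bool) ∉ insert (Sum.inl a)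
            (insert (Sum.inr true) (insert (Sum.inr false) (M.image Sum.inl))) := by
          simp only [Finset.mem_insert, Sum.inl.injEq, Finset.mem_image,
            reduceCtorEq] at hw2 ⊢
          intro hc
          rcases hc with h1 | h1 | h1 | ⟨b, hb1, hb2⟩ <;> simp_all
        exact (ih (Sum.inl w'') ⟨hE2, hne⟩ hmem).1 (insert w'' (insert a M)) w'' true rfl
          (by ext t; rcases t with t | t <;> simp [lift] <;> tauto) (fun _ => by simp)
      · exact absurd hE.1 (by simp)

end SubdivAux

/-- subdividing a directed edge `u → v` by inserting two fresh nodes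
(replacing `u → v` with `u → x → y → v`) preserves the winner of Generalized Geography
from any original start node `s`: the first player wins on the original graph iff the
first player wins on the subdivided graph. -/
theorem subdivision_preserves_winner {V : Type} [DecidableEq V]
    (E : V → V → Prop) (u v : V) (huv : E u v) (s : V) :
    MoverWins E {s} s ↔
      MoverWins (SubdivTwo E u v) {Sum.inl s} (Sum.inl s) := by
  constructor
  · intro h
    have := SubdivAux.fwd E u v huv h false (by simp)
    rwa [show SubdivAux.lift ({s} : Finset V) false = {Sum.inl s} by
      simp [SubdivAux.lift]] at this
  · intro h
    exact (SubdivAux.rev E u v huv h).1 {s} s false rfl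
      (by simp [SubdivAux.lift]) (by simp)
end

section
/- In the endgame of the standard Formula Game–to–Geography reduction: suppose all diamonds have been traversed (so for each variable exactly one of its true/false nodes is marked, along with both endpoints of each diamond), a clause node has been marked by Player 2, and Player 1 marks a literal node whose unique outgoing edge goes to diamond node d. Then Player 1 wins if and only if d is already marked. -/
/-- the endgame of the Formula Game–to–Geography reduction.  Player 1 has
just marked the literal node `ℓ` (so `ℓ ∈ M` and Player 2 is to move from `ℓ`); `ℓ` has a
unique outgoing edge, to the diamond truth-value node `d`, and `d` has a unique outgoing
edge, to the diamond's exit node `x`, which is already marked.  Then Player 1 wins (the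
mover, Player 2, has no winning strategy — indeed if `d` is marked Player 2 is stuck at
once, and if `d` is unmarked Player 2 moves there and Player 1 is stuck) iff `d` is
already marked. -/
theorem reduction_endgame {V : Type} [DecidableEq V] (E : V → V → Prop)
    (M : Finset V) (ℓ d x : V) (hℓ : ℓ ∈ M) (hx : x ∈ M)
    (hout : ∀ w, E ℓ w ↔ w = d) (hd : ∀ w, E d w ↔ w = x) :
    (¬ MoverWins E M ℓ) ↔ d ∈ M := by
  constructor
  · intro hnw
    by_contra hdM
    apply hnw
    exact MoverWins.intro M ℓ d ((hout d).mpr rfl) hdM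
      (fun u hEu hu => absurd ((hd u).mp hEu ▸ Finset.mem_insert_of_mem hx : u ∈ insert d M) hu)
  · intro hdM hw
    rcases hw with ⟨_, _, w, hE, hwM, _⟩
    exact hwM ((hout w).mp hE ▸ hdM)
end

section
/- A chain of n cells c₁, …, cₙ in the hexagonal grid in which consecutive cells are adjacent, no non-consecutive cells are adjacent, and only c₁ is adjacent to the rest of the Hive H (a connected set disjoint from the chain), has the property that every cell cᵢ with i < n is a cut vertex of H ∪ {c₁, …, cₙ}; hence all pieces in the chain except the last are locked by the One Hive rule. -/
/-- Adjacency in the hexagonal grid: cells are elements of `ℤ × ℤ`, and each cell is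
adjacent to its translates by the six directions
`(1,0), (-1,0), (0,1), (0,-1), (1,-1), (-1,1)`. -/
def hexAdj (a b : ℤ × ℤ) : Prop :=
  b - a ∈ ({(1, 0), (-1, 0), (0, 1), (0, -1), (1, -1), (-1, 1)} : Set (ℤ × ℤ))

/-- Reachability inside a set `S` of cells: the reflexive-transitive closure of
hex-adjacency restricted to `S`. -/
def ReachIn (S : Set (ℤ × ℤ)) : ℤ × ℤ → ℤ × ℤ → Prop :=
  Relation.ReflTransGen (fun x y => x ∈ S ∧ y ∈ S ∧ hexAdj x y)

/-- A set of cells is connected if any two of its cells are joined by a path of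
pairwise-adjacent cells inside the set. -/
def HexConnected (S : Set (ℤ × ℤ)) : Prop := ∀ a ∈ S, ∀ b ∈ S, ReachIn S a b

/-- a chain of `n` cells `c 0, …, c (n-1)` (pairwise distinct, consecutive
cells adjacent, non-consecutive cells non-adjacent), attached to the Hive `H` (a finite
connected set of cells disjoint from the chain) only through its first cell `c 0`, has
the property that every cell `c i` except the last is a cut vertex of
`H ∪ {c 0, …, c (n-1)}`; hence all pieces in the chain except the last are locked by the
One Hive rule. -/
theorem chain_locked (H : Set (ℤ × ℤ)) (hHfin : H.Finite) (hHconn : HexConnected H)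
    (n : ℕ) (hn : 1 ≤ n) (c : ℕ → ℤ × ℤ)
    (hnotH : ∀ i, i < n → c i ∉ H)
    (hinj : ∀ i j, i < n → j < n → c i = c j → i = j)
    (hadj : ∀ i, i + 1 < n → hexAdj (c i) (c (i + 1)))
    (hnonadj : ∀ i j, i < n → j < n → i + 2 ≤ j →
      ¬ hexAdj (c i) (c j) ∧ ¬ hexAdj (c j) (c i))
    (hc0 : ∃ h ∈ H, hexAdj (c 0) h)
    (hrest : ∀ i, 1 ≤ i → i < n → ∀ h ∈ H, ¬ hexAdj (c i) h ∧ ¬ hexAdj h (c i)) :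
    ∀ i, i + 1 < n →
      ¬ HexConnected ((H ∪ {x | ∃ j, j < n ∧ x = c j}) \ {c i}) := by
  intro i hi hconn
  obtain ⟨h0, hh0H, hadj0⟩ := hc0
  have hiltn : i < n := by omega
  have hmem1 : c (i+1) ∈ (H ∪ {x | ∃ j, j < n ∧ x = c j}) \ {c i} := by
    refine ⟨Or.inr ⟨i+1, hi, rfl⟩, ?_⟩
    intro hmem
    have := hinj (i+1) i hi hiltn (Set.mem_singleton_iff.mp hmem)
    omega
  have hmemh : h0 ∈ (H ∪ {x | ∃ j, j < n ∧ x = c j}) \ {c i} := by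
    refine ⟨Or.inl hh0H, ?_⟩
    intro hmem
    rw [Set.mem_singleton_iff] at hmem
    exact hnotH i hiltn (hmem ▸ hh0H)
  have hreach := hconn _ hmem1 _ hmemh
  have key : ∀ x, ReachIn ((H ∪ {x | ∃ j, j < n ∧ x = c j}) \ {c i}) (c (i+1)) x →
      ∃ j, i < j ∧ j < n ∧ x = c j := by
    intro x hx
    induction hx with
    | refl => exact ⟨i+1, by omega, hi, rfl⟩
    | tail hab hbc ih =>
      obtain ⟨k, hik, hkn, rfl⟩ := ih
      obtain ⟨_, hc1, hadjbc⟩ := hbc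
      obtain ⟨hcS, hcne⟩ := hc1
      cases hcS with
      | inl hH => exact absurd hadjbc (hrest k (by omega) hkn _ hH).1
      | inr hC =>
        obtain ⟨j, hjn, rfl⟩ := hC
        refine ⟨j, ?_, hjn, rfl⟩
        by_contra hji
        push_neg at hji
        rcases eq_or_lt_of_le hji with heq | hlt
        · exact hcne (Set.mem_singleton_iff.mpr (by rw [heq]))
        · exact (hnonadj j k hjn hkn (by omega)).2 hadjbc
  obtain ⟨j, _, hjn, hEq⟩ := key _ hreach
  exact hnotH j hjn (hEq ▸ hh0H)
end
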